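/- In the filtration A ⊃ (τ-1)A ⊃ (τ-1)²A ⊃ ⋯ of A = Z_p[G]/(N_G), each successive quotient (τ-1)^i A/(τ-1)^{i+1} A is a one-dimensional F_p-vector space on which Δ ≅ F_p^× acts through the character ω^i. -/

import Mathlib

/-!
`A` is `ℤ_p[ζ_p]` in disguise, with uniformiser `π = τ - 1`. Since `p = ∑_g (1 - g)` in `A`,
`p ∈ (π)`; as `A` is generated by `τ ≡ 1 (mod π)` over `ℤ_p`, every element is congruent to an
integer mod `π`, so each graded piece `πⁱA/πⁱ⁺¹A` is spanned by `πⁱ` and killed by `p`. It is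
nonzero because `τ ↦ X + 1` maps `A` to `ℤ_p[X]/(Φ_p(X + 1))`, a domain as `Φ_p(X + 1)` is
Eisenstein, in which the image `X` of `π` is a nonzero nonunit. Finally `σ` fixes `A` mod `π`
and sends `π` to `τᵏ - 1 ≡ kπ (mod π²)` with `k = ω(σ)`, hence acts on `πⁱA/πⁱ⁺¹A` as `kⁱ`.
-/

abbrev Gp (p : ℕ) := Multiplicative (ZMod p)

noncomputable def NG (p : ℕ) [Fact p.Prime] : MonoidAlgebra ℤ_[p] (Gp p) :=
  ∑ g : Gp p, MonoidAlgebra.of ℤ_[p] (Gp p) g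

/-- The ring `A = ℤ_p[G]/(N_G)`. -/
abbrev Ap (p : ℕ) [Fact p.Prime] :=
  MonoidAlgebra ℤ_[p] (Gp p) ⧸ Ideal.span {NG p}

noncomputable def tau (p : ℕ) [Fact p.Prime] : Ap p :=
  Ideal.Quotient.mk _ (MonoidAlgebra.of ℤ_[p] (Gp p) (Multiplicative.ofAdd (1 : ZMod p)))

open Polynomial Finset

section CommRing

variable {R : Type*} [CommRing R]

theorem sq_sub_one_dvd_pow_sub_one_sub_mul (t : R) (k : ℕ) :
    (t - 1) ^ 2 ∣ t ^ k - 1 - k * (t - 1) := by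
  induction k with
  | zero => simp
  | succ k ih =>
    have key : t ^ (k + 1) - 1 - (k + 1 : ℕ) * (t - 1)
        = (t ^ k - 1 - k * (t - 1)) + (t - 1) * (t ^ k - 1) := by push_cast; ring
    rw [key, sq]
    exact dvd_add (sq (t - 1) ▸ ih) (mul_dvd_mul_left _ (sub_one_dvd_pow_sub_one t k))

theorem pow_succ_dvd_pow_sub_pow {π u v : R} (hu : π ∣ u) (hv : π ∣ v) (huv : π ^ 2 ∣ u - v)
    (i : ℕ) : π ^ (i + 1) ∣ u ^ i - v ^ i := by
  induction i with
  | zero => simp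
  | succ i ih =>
    have key : u ^ (i + 1) - v ^ (i + 1) = u * (u ^ i - v ^ i) + (u - v) * v ^ i := by ring
    rw [key]
    refine dvd_add ?_ ?_
    · rw [pow_succ']
      exact mul_dvd_mul hu ih
    · rw [show i + 1 + 1 = 2 + i by ring, pow_add]
      exact mul_dvd_mul huv (pow_dvd_pow_of_dvd hv i)

theorem pow_succ_dvd_map_sub_pow_mul {F : Type*} [FunLike F R R] [RingHomClass F R R] {π : R}
    (e : F) (k : R) (he : ∀ a, π ∣ e a - a)
    (hπ : π ^ 2 ∣ e π - k * π) (i : ℕ) (a : R) :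
    π ^ (i + 1) ∣ e (π ^ i * a) - k ^ i * (π ^ i * a) := by
  have hπe : π ∣ e π := by
    simpa using dvd_add ((dvd_pow_self π two_ne_zero).trans hπ) (dvd_mul_left π k)
  have hpow : π ^ (i + 1) ∣ e π ^ i - (k * π) ^ i :=
    pow_succ_dvd_pow_sub_pow hπe (dvd_mul_left π k) hπ i
  have hunit : π ^ (i + 1) ∣ π ^ i * (k ^ i * (e a - a)) := by
    rw [pow_succ]
    exact mul_dvd_mul_left _ ((he a).mul_left _)
  convert dvd_add (hpow.mul_right (e a)) hunit using 1
  rw [map_mul, map_pow]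
  ring

theorem dvd_natCast_sub_natCast_of_zmod {π : R} {p m n : ℕ} (hp : π ∣ (p : R))
    (h : (m : ZMod p) = n) : π ∣ (m : R) - n := by
  have hdvd := map_dvd (Int.castRingHom R) ((ZMod.natCast_eq_natCast_iff n m p).mp h.symm).dvd
  simp only [eq_intCast, Int.cast_natCast, Int.cast_sub] at hdvd
  exact hp.trans hdvd

end CommRing

section Adjoin

variable {A R : Type*} [CommRing A] [CommRing R] [Algebra A R] {t : R}

theorem exists_sub_one_dvd_sub_algebraMap_of_adjoin_eq_top (ht : Algebra.adjoin A {t} = ⊤) (a : R) :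
    ∃ r : A, t - 1 ∣ a - algebraMap A R r := by
  let q := Ideal.Quotient.mkₐ A (Ideal.span {t - 1})
  have hbot : (⊤ : Subalgebra A R).map q = ⊥ := by
    rw [← ht, AlgHom.map_adjoin, Set.image_singleton, Ideal.Quotient.mkₐ_eq_mk,
      show Ideal.Quotient.mk _ t = 1 from Ideal.Quotient.eq.mpr (Ideal.mem_span_singleton_self _),
      Algebra.adjoin_singleton_one]
  have hqa : q a ∈ (⊤ : Subalgebra A R).map q := Subalgebra.mem_map.mpr ⟨a, trivial, rfl⟩
  obtain ⟨r, hr⟩ := Algebra.mem_bot.mp (hbot ▸ hqa)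
  exact ⟨r, Ideal.mem_span_singleton.mp
    (Ideal.Quotient.eq.mp (hr.symm.trans (q.commutes r).symm))⟩

theorem sub_mem_of_adjoin_eq_top (ht : Algebra.adjoin A {t} = ⊤) (I : Ideal R) (e : R →ₐ[A] R)
    (he : e t - t ∈ I) (a : R) : e a - a ∈ I := by
  have key : (Ideal.Quotient.mkₐ A I).comp e = Ideal.Quotient.mkₐ A I :=
    AlgHom.ext_of_adjoin_eq_top ht fun _ hx => by
      rw [Set.mem_singleton_iff.mp hx]
      exact Ideal.Quotient.eq.mpr he
  exact Ideal.Quotient.eq.mp (AlgHom.congr_fun key a)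

end Adjoin

def powZModHom {M : Type*} [Monoid M] (n : ℕ) [NeZero n] (x : M) (hx : x ^ n = 1) :
    Multiplicative (ZMod n) →* M where
  toFun g := x ^ g.toAdd.val
  map_one' := by simp
  map_mul' a b := by rw [toAdd_mul, ZMod.val_add, ← pow_eq_pow_mod _ hx, pow_add]

section Cyclotomic

variable (p : ℕ) [Fact p.Prime]

noncomputable def shiftedCyclotomic : ℤ_[p][X] := (cyclotomic p ℤ_[p]).comp (X + C 1)

theorem shiftedCyclotomic_monic : (shiftedCyclotomic p).Monic :=
  (cyclotomic.monic p ℤ_[p]).comp_X_add_C 1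

theorem natDegree_shiftedCyclotomic : (shiftedCyclotomic p).natDegree = p - 1 := by
  rw [shiftedCyclotomic, natDegree_comp, natDegree_cyclotomic, natDegree_X_add_C, mul_one,
    Nat.totient_prime Fact.out]

theorem coeff_shiftedCyclotomic {n : ℕ} (hn : n < p) :
    (shiftedCyclotomic p).coeff n = p.choose (n + 1) := by
  rw [shiftedCyclotomic, cyclotomic_prime, map_one, geom_sum_X_comp_X_add_one_eq_sum,
    finsetSum_coeff, Finset.sum_eq_single n]
  · simp
  · intro b _ hb
    simp [coeff_X_pow, hb.symm]
  · intro h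
    exact absurd (mem_range.mpr hn) h

theorem aeval_shiftedCyclotomic {S : Type*} [CommRing S] [Algebra ℤ_[p] S] (x : S) :
    aeval x (shiftedCyclotomic p) = ∑ j ∈ range p, (x + 1) ^ j := by
  simp [shiftedCyclotomic, cyclotomic_prime]

theorem shiftedCyclotomic_isEisensteinAt :
    (shiftedCyclotomic p).IsEisensteinAt (IsLocalRing.maximalIdeal ℤ_[p]) := by
  have hp := (Fact.out : p.Prime)
  refine (shiftedCyclotomic_monic p).isEisensteinAt_of_mem_of_notMem
    (Ideal.IsMaximal.ne_top inferInstance) (fun {n} hn => ?_) ?_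
  · rw [natDegree_shiftedCyclotomic] at hn
    rw [coeff_shiftedCyclotomic p (by omega), PadicInt.maximalIdeal_eq_span_p,
      Ideal.mem_span_singleton]
    exact Nat.cast_dvd_cast (hp.dvd_choose_self n.succ_ne_zero (by omega))
  · rw [coeff_shiftedCyclotomic p hp.pos, Nat.choose_one_right, PadicInt.maximalIdeal_eq_span_p,
      Ideal.span_singleton_pow, Ideal.mem_span_singleton]
    intro h
    have := (pow_dvd_pow_iff (n := 2) (m := 1) PadicInt.prime_p.ne_zero
      PadicInt.prime_p.not_isUnit).mp (by rwa [pow_one])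
    omega

theorem irreducible_shiftedCyclotomic : Irreducible (shiftedCyclotomic p) :=
  (shiftedCyclotomic_isEisensteinAt p).irreducible (IsLocalRing.maximalIdeal.isMaximal _).isPrime
    (shiftedCyclotomic_monic p).isPrimitive
    (by rw [natDegree_shiftedCyclotomic]; have := (Fact.out : p.Prime).two_le; omega)

instance : IsDomain (AdjoinRoot (shiftedCyclotomic p)) :=
  AdjoinRoot.isDomain_of_prime (irreducible_shiftedCyclotomic p).prime

theorem geom_sum_root_add_one :
    ∑ j ∈ range p, (AdjoinRoot.root (shiftedCyclotomic p) + 1) ^ j = 0 := by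
  rw [← aeval_shiftedCyclotomic, AdjoinRoot.aeval_eq, AdjoinRoot.mk_self]

theorem root_add_one_pow_eq_one : (AdjoinRoot.root (shiftedCyclotomic p) + 1) ^ p = 1 := by
  rw [← sub_eq_zero, ← geom_sum_mul, geom_sum_root_add_one, zero_mul]

theorem root_shiftedCyclotomic_ne_zero : AdjoinRoot.root (shiftedCyclotomic p) ≠ 0 := by
  intro h
  have hsum := geom_sum_root_add_one p
  rw [h, zero_add] at hsum
  simp only [one_pow, sum_const, card_range, nsmul_eq_mul, mul_one] at hsum
  have hdeg : (shiftedCyclotomic p).degree ≠ 0 := by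
    rw [degree_eq_natDegree (shiftedCyclotomic_monic p).ne_zero, natDegree_shiftedCyclotomic]
    have := (Fact.out : p.Prime).two_le
    norm_cast
    omega
  exact PadicInt.prime_p.ne_zero
    (AdjoinRoot.of.injective_of_degree_ne_zero hdeg (by simpa using hsum))

theorem not_isUnit_root_shiftedCyclotomic : ¬IsUnit (AdjoinRoot.root (shiftedCyclotomic p)) := by
  have hev : (shiftedCyclotomic p).eval₂ PadicInt.toZMod 0 = 0 := by
    rw [eval₂_at_zero, coeff_shiftedCyclotomic p (Fact.out : p.Prime).pos, Nat.choose_one_right,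
      map_natCast, ZMod.natCast_self]
  intro h
  have := h.map (AdjoinRoot.lift PadicInt.toZMod 0 hev)
  rw [AdjoinRoot.lift_root] at this
  exact not_isUnit_zero this

end Cyclotomic

section GroupRing

variable (p : ℕ) [Fact p.Prime]

theorem mk_of_eq_tau_pow (g : Gp p) :
    Ideal.Quotient.mk (Ideal.span {NG p}) (MonoidAlgebra.of ℤ_[p] (Gp p) g)
      = tau p ^ g.toAdd.val := by
  rw [tau, ← map_pow, ← map_pow, ← ofAdd_nsmul, nsmul_one, ZMod.natCast_zmod_val, ofAdd_toAdd]

theorem adjoin_tau_eq_top : Algebra.adjoin ℤ_[p] {tau p} = ⊤ := by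
  refine eq_top_iff.mpr fun a _ => ?_
  obtain ⟨f, rfl⟩ := Ideal.Quotient.mk_surjective a
  have hf : Ideal.Quotient.mkₐ ℤ_[p] (Ideal.span {NG p}) f ∈
      (Algebra.adjoin ℤ_[p] (MonoidAlgebra.of ℤ_[p] (Gp p) '' f.coeff.support)).map
        (Ideal.Quotient.mkₐ ℤ_[p] (Ideal.span {NG p})) :=
    Subalgebra.mem_map.mpr ⟨f, MonoidAlgebra.mem_adjoin_support f, rfl⟩
  rw [AlgHom.map_adjoin] at hf
  refine Algebra.adjoin_le ?_ hf
  rintro _ ⟨_, ⟨g, -, rfl⟩, rfl⟩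
  rw [Ideal.Quotient.mkₐ_eq_mk, mk_of_eq_tau_pow]
  exact Subalgebra.pow_mem _ (Algebra.self_mem_adjoin_singleton _ _) _

theorem tau_sub_one_dvd_natCast : tau p - 1 ∣ (p : Ap p) := by
  have hN : ∑ g : Gp p, Ideal.Quotient.mk (Ideal.span {NG p}) (MonoidAlgebra.of ℤ_[p] (Gp p) g)
      = 0 := by
    rw [← map_sum]
    exact Ideal.Quotient.eq_zero_iff_mem.mpr (Ideal.subset_span rfl)
  have key : (p : Ap p) = ∑ g : Gp p, (1 - tau p ^ g.toAdd.val) := by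
    simp_rw [← mk_of_eq_tau_pow]
    rw [sum_sub_distrib, hN]
    simp
  rw [key]
  exact dvd_sum fun g _ => dvd_sub_comm.mp (sub_one_dvd_pow_sub_one _ _)

theorem exists_tau_sub_one_dvd_sub_natCast (a : Ap p) : ∃ c : ZMod p, tau p - 1 ∣ a - c.val := by
  obtain ⟨r, hr⟩ := exists_sub_one_dvd_sub_algebraMap_of_adjoin_eq_top (adjoin_tau_eq_top p) a
  refine ⟨PadicInt.toZMod r, ?_⟩
  have hr' : (p : ℤ_[p]) ∣ r - (PadicInt.toZMod r).val := by
    rw [← Ideal.mem_span_singleton, ← PadicInt.maximalIdeal_eq_span_p, ← PadicInt.ker_toZMod,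
      RingHom.mem_ker, map_sub, map_natCast, ZMod.natCast_zmod_val, sub_self]
  have := map_dvd (algebraMap ℤ_[p] (Ap p)) hr'
  rw [map_natCast, map_sub, map_natCast] at this
  convert dvd_add hr ((tau_sub_one_dvd_natCast p).trans this) using 1
  ring

theorem tau_sub_one_dvd_algHom_sub (e : Ap p →ₐ[ℤ_[p]] Ap p) {k : ℕ} (he : e (tau p) = tau p ^ k)
    (a : Ap p) : tau p - 1 ∣ e a - a := by
  refine Ideal.mem_span_singleton.mp (sub_mem_of_adjoin_eq_top (adjoin_tau_eq_top p) _ e ?_ a)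
  rw [Ideal.mem_span_singleton, he]
  convert (sub_one_dvd_pow_sub_one (tau p) k).sub (dvd_refl (tau p - 1)) using 1
  ring

theorem pow_succ_dvd_algHom_sub_nsmul (e : Ap p →ₐ[ℤ_[p]] Ap p) (u : ZMod p)
    (he : e (tau p) = tau p ^ u.val) (i : ℕ) {x : Ap p} (hx : (tau p - 1) ^ i ∣ x) :
    (tau p - 1) ^ (i + 1) ∣ e x - (u ^ i).val • x := by
  obtain ⟨a, rfl⟩ := hx
  have hπ : (tau p - 1) ^ 2 ∣ e (tau p - 1) - (u.val : Ap p) * (tau p - 1) := by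
    rw [map_sub, map_one, he]
    exact sq_sub_one_dvd_pow_sub_one_sub_mul _ _
  have hmain := pow_succ_dvd_map_sub_pow_mul e (u.val : Ap p)
    (tau_sub_one_dvd_algHom_sub p e he) hπ i a
  have hcast : tau p - 1 ∣ ((u.val ^ i : ℕ) : Ap p) - ((u ^ i).val : ℕ) :=
    dvd_natCast_sub_natCast_of_zmod (tau_sub_one_dvd_natCast p) (by simp)
  have hscalar : (tau p - 1) ^ (i + 1) ∣ (tau p - 1) ^ i * a * (((u.val ^ i : ℕ) : Ap p)
      - ((u ^ i).val : ℕ)) := by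
    rw [pow_succ]
    exact mul_dvd_mul (dvd_mul_right _ _) hcast
  convert dvd_add hmain hscalar using 1
  rw [nsmul_eq_mul]
  push_cast
  ring

noncomputable def rootOfUnityChar : Gp p →* AdjoinRoot (shiftedCyclotomic p) :=
  powZModHom p _ (root_add_one_pow_eq_one p)

theorem rootOfUnityChar_ofAdd_one :
    rootOfUnityChar p (Multiplicative.ofAdd 1) = AdjoinRoot.root (shiftedCyclotomic p) + 1 := by
  simp [rootOfUnityChar, powZModHom, ZMod.val_one]

theorem rootOfUnityChar_ne_one : rootOfUnityChar p ≠ 1 := fun h =>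
  root_shiftedCyclotomic_ne_zero p <| by
    simpa [rootOfUnityChar_ofAdd_one] using DFunLike.congr_fun h (Multiplicative.ofAdd 1)

noncomputable def toAdjoinRoot : Ap p →+* AdjoinRoot (shiftedCyclotomic p) :=
  Ideal.Quotient.lift _ (MonoidAlgebra.lift ℤ_[p] _ (Gp p) (rootOfUnityChar p)).toRingHom
    fun a ha => by
      obtain ⟨b, rfl⟩ := Ideal.mem_span_singleton'.mp ha
      simp [NG, sum_hom_units_eq_zero _ (rootOfUnityChar_ne_one p)]

theorem toAdjoinRoot_tau_sub_one :
    toAdjoinRoot p (tau p - 1) = AdjoinRoot.root (shiftedCyclotomic p) := by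
  simp [toAdjoinRoot, tau, rootOfUnityChar_ofAdd_one]

theorem not_tau_sub_one_pow_succ_dvd_pow (i : ℕ) :
    ¬(tau p - 1) ^ (i + 1) ∣ (tau p - 1) ^ i := by
  intro h
  have := map_dvd (toAdjoinRoot p) h
  rw [map_pow, map_pow, toAdjoinRoot_tau_sub_one, pow_dvd_pow_iff
    (root_shiftedCyclotomic_ne_zero p) (not_isUnit_root_shiftedCyclotomic p)] at this
  omega

end GroupRing

theorem stmt_9_general (p : ℕ) [Fact p.Prime]
    (act : (ZMod p)ˣ →* (Ap p ≃ₐ[ℤ_[p]] Ap p))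
    (hact : ∀ σ : (ZMod p)ˣ, act σ (tau p) = (tau p) ^ ((σ : ZMod p)).val)
    (i : ℕ) :
    -- the quotient is killed by p ...
    (∀ x ∈ Ideal.span {(tau p - 1) ^ i}, p • x ∈ Ideal.span {(tau p - 1) ^ (i + 1)}) ∧
    -- ... and is one-dimensional over 𝔽_p
    (∃ b ∈ Ideal.span {(tau p - 1) ^ i}, b ∉ Ideal.span {(tau p - 1) ^ (i + 1)} ∧
      ∀ x ∈ Ideal.span {(tau p - 1) ^ i}, ∃ c : ZMod p,
        x - c.val • b ∈ Ideal.span {(tau p - 1) ^ (i + 1)}) ∧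
    -- Δ acts on it through ω^i
    (∀ (σ : (ZMod p)ˣ), ∀ x ∈ Ideal.span {(tau p - 1) ^ i},
      act σ x - (((σ : ZMod p) ^ i)).val • x ∈ Ideal.span {(tau p - 1) ^ (i + 1)}) := by
  simp only [Ideal.mem_span_singleton]
  refine ⟨fun x hx => ?_, ⟨_, dvd_rfl, not_tau_sub_one_pow_succ_dvd_pow p i, fun x hx => ?_⟩,
    fun σ x hx => pow_succ_dvd_algHom_sub_nsmul p (act σ).toAlgHom σ (hact σ) i hx⟩
  · rw [nsmul_eq_mul, pow_succ']
    exact mul_dvd_mul (tau_sub_one_dvd_natCast p) hx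
  · obtain ⟨a, rfl⟩ := hx
    obtain ⟨c, hc⟩ := exists_tau_sub_one_dvd_sub_natCast p a
    refine ⟨c, ?_⟩
    rw [nsmul_eq_mul, pow_succ]
    convert mul_dvd_mul_left ((tau p - 1) ^ i) hc using 1
    ring

/-- in the filtration `A ⊃ (τ-1)A ⊃ (τ-1)²A ⊃ ⋯` of `A = ℤ_p[G]/(N_G)`,
each quotient `(τ-1)^i A/(τ-1)^{i+1} A` is a one-dimensional `𝔽_p`-vector space on which
`Δ ≅ 𝔽_pˣ` (acting by `ℤ_p`-algebra automorphisms with `σ(τ) = τ^{ω(σ)}`) acts through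
the character `ω^i`. -/
theorem stmt_9 (p : ℕ) [Fact p.Prime] (hodd : Odd p)
    (act : (ZMod p)ˣ →* (Ap p ≃ₐ[ℤ_[p]] Ap p))
    (hact : ∀ σ : (ZMod p)ˣ, act σ (tau p) = (tau p) ^ ((σ : ZMod p)).val)
    (i : ℕ) :
    -- the quotient is killed by p ...
    (∀ x ∈ Ideal.span {(tau p - 1) ^ i}, p • x ∈ Ideal.span {(tau p - 1) ^ (i + 1)}) ∧
    -- ... and is one-dimensional over 𝔽_p
    (∃ b ∈ Ideal.span {(tau p - 1) ^ i}, b ∉ Ideal.span {(tau p - 1) ^ (i + 1)} ∧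
      ∀ x ∈ Ideal.span {(tau p - 1) ^ i}, ∃ c : ZMod p,
        x - c.val • b ∈ Ideal.span {(tau p - 1) ^ (i + 1)}) ∧
    -- Δ acts on it through ω^i
    (∀ (σ : (ZMod p)ˣ), ∀ x ∈ Ideal.span {(tau p - 1) ^ i},
      act σ x - (((σ : ZMod p) ^ i)).val • x ∈ Ideal.span {(tau p - 1) ^ (i + 1)}) :=
  stmt_9_general p act hact i
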